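/- arXiv:1806.06677 — 2 statements merged into one kernel-verified Lean document; each statement's English description precedes it below -/
import Mathlib

section
/- Let A be a complex unital Banach algebra, p : ℝ → A a continuously differentiable path of idempotents (p(t)² = p(t) for all t), and v : ℝ → A a differentiable solution of the monodromy equation v'(t) = [p'(t), p(t)]·v(t) with v(0) = p(0). Then for all t ∈ ℝ: p(t)·v(t) = v(t) and v(t)·p(0) = v(t). In particular, for a homomorphism-quotient situation this gives w·(1 − q(0)) = 0 for the monodromy w of a path of projections q. -/
/-!
Differentiating `p² = p` gives `p' = p'p + pp'`, hence `pp'p = 0`, and from this one checks that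
`p·v` satisfies the monodromy equation `x' = [p', p]·x`; so does `v·p(0)`, trivially. Both agree
with `v` at `t = 0`, and solutions of a linear equation with continuous coefficient are unique.
-/

open Set

lemma lipschitzWith_mul_left {A : Type*} [NormedRing A] (a : A) :
    LipschitzWith ‖a‖₊ (a * ·) :=
  LipschitzWith.of_dist_le_mul fun x y => by
    simpa only [dist_eq_norm, ← mul_sub, coe_nnnorm] using norm_mul_le a (x - y)

/-- A continuous coefficient is bounded on bounded intervals, so the right-hand side is
Lipschitz there. -/
theorem eq_of_hasDerivAt_mul_left {A : Type*} [NormedRing A] [NormedSpace ℝ A]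
    {G f g : ℝ → A} (hG : Continuous G)
    (hf : ∀ t, HasDerivAt f (G t * f t) t) (hg : ∀ t, HasDerivAt g (G t * g t) t)
    {t₀ : ℝ} (h₀ : f t₀ = g t₀) : f = g := by
  funext t
  obtain ⟨a, b, ht, ht₀⟩ : ∃ a b, t ∈ Ioo a b ∧ t₀ ∈ Ioo a b :=
    ⟨min t t₀ - 1, max t t₀ + 1, by constructor <;> constructor <;> grind⟩
  obtain ⟨C, hC⟩ :=
    (isCompact_Icc (a := a) (b := b)).exists_bound_of_continuousOn hG.continuousOn
  have hlip : ∀ s ∈ Ioo a b, LipschitzOnWith C.toNNReal (G s * ·) univ := fun s hs =>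
    ((lipschitzWith_mul_left (G s)).weaken (by
      rw [← NNReal.coe_le_coe, coe_nnnorm, Real.coe_toNNReal']
      exact (hC s (Ioo_subset_Icc_self hs)).trans (le_max_left _ _))).lipschitzOnWith
  exact ODE_solution_unique_of_mem_Ioo hlip ht₀ (fun s _ => ⟨hf s, trivial⟩)
    (fun s _ => ⟨hg s, trivial⟩) h₀ ht

namespace IsIdempotentElem

variable {R : Type*} [Ring R] {e d : R}

theorem mul_mul_eq_zero_of_eq_mul_add_mul (he : IsIdempotentElem e)
    (hd : d = d * e + e * d) : e * d * e = 0 := by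
  have h : e * d * e = e * d * e + e * d * e :=
    calc e * d * e = e * (d * e + e * d) * e := by rw [← hd]
      _ = e * d * (e * e) + e * e * d * e := by noncomm_ring
      _ = e * d * e + e * d * e := by rw [he.eq]
  simpa using h

theorem add_mul_sub_eq_sub_mul (he : IsIdempotentElem e) (hd : d = d * e + e * d) :
    d + e * (d * e - e * d) = (d * e - e * d) * e := by
  have hede := he.mul_mul_eq_zero_of_eq_mul_add_mul hd
  calc d + e * (d * e - e * d) = d * e + e * d + e * d * e - e * e * d := by
        rw [← hd]; noncomm_ring
    _ = d * (e * e) - e * d * e := by rw [he.eq, hede]; noncomm_ring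
    _ = (d * e - e * d) * e := by noncomm_ring

end IsIdempotentElem

section IdempotentPath

variable {A : Type*} [NormedRing A] [NormedAlgebra ℝ A] {p v : ℝ → A} {p' : A} {t : ℝ}

theorem HasDerivAt.eq_mul_add_mul_of_isIdempotentElem (hp : HasDerivAt p p' t)
    (hidem : ∀ s, IsIdempotentElem (p s)) : p' = p' * p t + p t * p' := by
  have hpp : HasDerivAt (fun s => p s * p s) (p' * p t + p t * p') t := hp.mul hp
  simp only [fun s => (hidem s).eq] at hpp
  exact hp.unique hpp

theorem HasDerivAt.mul_of_isIdempotentElem (hp : HasDerivAt p p' t)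
    (hidem : ∀ s, IsIdempotentElem (p s))
    (hv : HasDerivAt v ((p' * p t - p t * p') * v t) t) :
    HasDerivAt (fun s => p s * v s) ((p' * p t - p t * p') * (p t * v t)) t := by
  convert hp.fun_mul hv using 1
  rw [← mul_assoc, ← (hidem t).add_mul_sub_eq_sub_mul
    (hp.eq_mul_add_mul_of_isIdempotentElem hidem), add_mul, mul_assoc]

end IdempotentPath

theorem monodromy_range_identities_general
    {A : Type*} [NormedRing A] [NormedAlgebra ℂ A]
    (p : ℝ → A) (hp : ContDiff ℝ 1 p) (hidem : ∀ t : ℝ, p t * p t = p t)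
    (v : ℝ → A)
    (hv : ∀ t : ℝ, HasDerivAt v ((deriv p t * p t - p t * deriv p t) * v t) t)
    (hv0 : v 0 = p 0) :
    ∀ t : ℝ, p t * v t = v t ∧ v t * p 0 = v t := by
  have hG : Continuous fun t => deriv p t * p t - p t * deriv p t :=
    ((hp.continuous_deriv le_rfl).mul hp.continuous).sub
      (hp.continuous.mul (hp.continuous_deriv le_rfl))
  have hp' : ∀ t, HasDerivAt p (deriv p t) t :=
    fun t => (hp.differentiable one_ne_zero t).hasDerivAt
  have hrange : (fun t => p t * v t) = v :=
    eq_of_hasDerivAt_mul_left hG (fun t => (hp' t).mul_of_isIdempotentElem hidem (hv t)) hv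
      (t₀ := 0) (by rw [hv0, hidem 0])
  have hsource : (fun t => v t * p 0) = v :=
    eq_of_hasDerivAt_mul_left hG
      (fun t => by simpa only [mul_assoc] using (hv t).mul_const (p 0)) hv
      (t₀ := 0) (by rw [hv0, hidem 0])
  exact fun t => ⟨congrFun hrange t, congrFun hsource t⟩

/-- **Range identities for the monodromy of a path of idempotents.**
Let `A` be a complex unital Banach algebra, `p : ℝ → A` a continuously differentiable
path of idempotents (`p(t)² = p(t)`), and `v : ℝ → A` a differentiable solution of the
monodromy equation `v'(t) = [p'(t), p(t)]·v(t)` with `v(0) = p(0)`.  Then for all `t`: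
`p(t)·v(t) = v(t)` and `v(t)·p(0) = v(t)`. -/
theorem monodromy_range_identities
    {A : Type*} [NormedRing A] [NormedAlgebra ℂ A] [CompleteSpace A]
    (p : ℝ → A) (hp : ContDiff ℝ 1 p) (hidem : ∀ t : ℝ, p t * p t = p t)
    (v : ℝ → A)
    (hv : ∀ t : ℝ, HasDerivAt v ((deriv p t * p t - p t * deriv p t) * v t) t)
    (hv0 : v 0 = p 0) :
    ∀ t : ℝ, p t * v t = v t ∧ v t * p 0 = v t :=
  monodromy_range_identities_general p hp hidem v hv hv0
end

section
/- Let A be a unital C*-algebra, p : ℝ → A a continuously differentiable, 2π-periodic path of orthogonal projections (p(t)* = p(t), p(t)² = p(t), p(t + 2π) = p(t) for all t), and v : ℝ → A a continuously differentiable solution of the monodromy equation v'(t) = [p'(t), p(t)]·v(t) with v(0) = p(0). Then v(2π) + 1 − p(0) is a unitary element of A: (v(2π) + 1 − p(0))*·(v(2π) + 1 − p(0)) = (v(2π) + 1 − p(0))·(v(2π) + 1 − p(0))* = 1. -/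
/-!
Write `a = [p', p]`. Since `p` and `p'` are self-adjoint, `a` is skew-adjoint, so `v* v` is
constant, equal to `p(0)`. Differentiating `p² = p` gives `p' p + p p' = p'`, hence `p p' p = 0`
and `p' = [a, p]`: the projections are transported by the same flow. Thus `v v*` and `p` both
solve `f' = [a, f]` with `f(0) = p(0)`, so they agree by Grönwall, and periodicity gives
`v(2π) v(2π)* = p(0)`. In a C*-algebra `V* V = V V* = P` for a projection `P` makes `V` a partial
isometry on `P`, so `V + 1 - P` is unitary.
-/

open Set

section ProjectionPath

variable {A : Type*} [NormedRing A] [NormedAlgebra ℝ A] {p : ℝ → A} {p' : A} {t : ℝ}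

theorem HasDerivAt.isSelfAdjoint_of_forall [StarRing A] [StarModule ℝ A] [ContinuousStar A]
    (hp : HasDerivAt p p' t)
    (hsa : ∀ s, IsSelfAdjoint (p s)) : IsSelfAdjoint p' :=
  (by simpa only [funext fun s => (hsa s).star_eq] using hp.star :
    HasDerivAt p (star p') t).unique hp

theorem HasDerivAt.mul_add_mul_eq_of_forall_isIdempotentElem (hp : HasDerivAt p p' t)
    (hidem : ∀ s, IsIdempotentElem (p s)) : p' * p t + p t * p' = p' :=
  (by simpa only [funext fun s => (hidem s).eq] using hp.fun_mul hp :
    HasDerivAt p (p' * p t + p t * p') t).unique hp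

end ProjectionPath

theorem IsIdempotentElem.commutator_commutator_eq {R : Type*} [Ring R] {q d : R}
    (hq : IsIdempotentElem q) (hd : d * q + q * d = d) :
    (d * q - q * d) * q - q * (d * q - q * d) = d := by
  have hqdq : q * d * q = 0 := by
    have := congrArg (q * ·) hd
    simp only [mul_add, ← mul_assoc, hq.eq] at this
    exact add_eq_right.mp this
  calc (d * q - q * d) * q - q * (d * q - q * d)
      = d * (q * q) + (q * q) * d - 2 * (q * d * q) := by noncomm_ring
    _ = d := by rw [hq.eq, hqdq, mul_zero, sub_zero, hd]

theorem IsSelfAdjoint.star_commutator {R : Type*} [Ring R] [StarRing R] {a b : R}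
    (ha : IsSelfAdjoint a) (hb : IsSelfAdjoint b) : star (a * b - b * a) = -(a * b - b * a) := by
  rw [star_sub, star_mul, star_mul, ha.star_eq, hb.star_eq, neg_sub]

section SkewAdjointFlow

variable {A : Type*} [NormedRing A] [NormedAlgebra ℝ A] [StarRing A] [StarModule ℝ A]
  [ContinuousStar A] {v : ℝ → A} {a : A} {t : ℝ}

theorem HasDerivAt.mul_star_of_star_eq_neg (hv : HasDerivAt v (a * v t) t) (ha : star a = -a) :
    HasDerivAt (fun s => v s * star (v s)) (a * (v t * star (v t)) - v t * star (v t) * a) t := by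
  convert hv.fun_mul hv.star using 1
  rw [star_mul, ha]
  noncomm_ring

theorem HasDerivAt.star_mul_self_of_star_eq_neg (hv : HasDerivAt v (a * v t) t)
    (ha : star a = -a) : HasDerivAt (fun s => star (v s) * v s) 0 t := by
  convert hv.star.fun_mul hv using 1
  rw [star_mul, ha]
  noncomm_ring

end SkewAdjointFlow

theorem eq_zero_of_hasDerivAt_commutator {A : Type*} [NormedRing A] [NormedAlgebra ℝ A]
    {a f : ℝ → A} {t₀ t : ℝ} (ha : ContinuousOn a (Icc t₀ t))
    (hf : ∀ s, HasDerivAt f (a s * f s - f s * a s) s) (h₀ : f t₀ = 0) (ht : t₀ ≤ t) :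
    f t = 0 := by
  obtain ⟨K, hK⟩ := isCompact_Icc.exists_bound_of_continuousOn ha
  refine eq_zero_of_abs_deriv_le_mul_abs_self_of_eq_zero_right (K := 2 * K)
    (fun s _ => (hf s).continuousAt.continuousWithinAt) (fun s _ => (hf s).hasDerivWithinAt)
    h₀ (fun s hs => ?_) t ⟨ht, le_rfl⟩
  have haK := hK s (Ico_subset_Icc_self hs)
  calc ‖a s * f s - f s * a s‖ ≤ ‖a s‖ * ‖f s‖ + ‖f s‖ * ‖a s‖ :=
        (norm_sub_le _ _).trans (add_le_add (norm_mul_le _ _) (norm_mul_le _ _))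
    _ ≤ 2 * K * ‖f s‖ := by nlinarith [norm_nonneg (f s)]

theorem mul_eq_self_of_star_mul_self_eq {A : Type*} [NonUnitalNormedRing A] [StarRing A]
    [CStarRing A] {P V : A} (hP : IsStarProjection P) (hV : star V * V = P) : V * P = V := by
  have hP' : star P = P := hP.isSelfAdjoint
  have hzero : star (V * P - V) * (V * P - V) = 0 := by
    have : star (V * P - V) * (V * P - V)
        = P * (star V * V) * P - P * (star V * V) - star V * V * P + star V * V := by
      simp only [star_sub, star_mul, hP']
      noncomm_ring
    rw [this, hV]
    simp only [hP.isIdempotentElem.eq, sub_self, zero_sub, neg_add_cancel]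
  exact sub_eq_zero.mp ((CStarRing.star_mul_self_eq_zero_iff _).mp hzero)

theorem IsStarProjection.add_one_sub_mem_unitary {A : Type*} [NormedRing A] [StarRing A]
    [CStarRing A] {P V : A} (hP : IsStarProjection P) (h₁ : star V * V = P)
    (h₂ : V * star V = P) : V + 1 - P ∈ unitary A := by
  have hP' : star P = P := hP.isSelfAdjoint
  have hVP : V * P = V := mul_eq_self_of_star_mul_self_eq hP h₁
  have hVsP : star V * P = star V := mul_eq_self_of_star_mul_self_eq hP (by rwa [star_star])
  have hPV : P * V = V := by simpa [hP'] using congrArg star hVsP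
  have hPVs : P * star V = star V := by simpa [hP'] using congrArg star hVP
  have hPP : P * P = P := hP.isIdempotentElem.eq
  rw [Unitary.mem_iff, star_sub, star_add, star_one, hP']
  constructor
  · calc (star V + 1 - P) * (V + 1 - P)
        = star V * V + (star V - star V * P) + (V - P * V) + (1 - P - P + P * P) := by
          noncomm_ring
      _ = 1 := by rw [h₁, hVsP, hPV, hPP]; abel
  · calc (V + 1 - P) * (star V + 1 - P)
        = V * star V + (V - V * P) + (star V - P * star V) + (1 - P - P + P * P) := by
          noncomm_ring
      _ = 1 := by rw [h₂, hVP, hPVs, hPP]; abel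

open scoped Real in
theorem monodromy_plus_complement_unitary_general
    {A : Type*} [CStarAlgebra A]
    (p : ℝ → A) (hp : ContDiff ℝ 1 p)
    (hsa : ∀ t : ℝ, star (p t) = p t) (hidem : ∀ t : ℝ, p t * p t = p t)
    (hper : ∀ t : ℝ, p (t + 2 * π) = p t)
    (v : ℝ → A)
    (hv : ∀ t : ℝ, HasDerivAt v ((deriv p t * p t - p t * deriv p t) * v t) t)
    (hv0 : v 0 = p 0) :
    star (v (2 * π) + 1 - p 0) * (v (2 * π) + 1 - p 0) = 1 ∧
      (v (2 * π) + 1 - p 0) * star (v (2 * π) + 1 - p 0) = 1 := by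
  set a : ℝ → A := fun t => deriv p t * p t - p t * deriv p t
  have hv_flow (t : ℝ) : HasDerivAt v (a t * v t) t := hv t
  have hpd (t : ℝ) : HasDerivAt p (deriv p t) t := (hp.differentiable one_ne_zero t).hasDerivAt
  have ha_skew (t : ℝ) : star (a t) = -a t :=
    ((hpd t).isSelfAdjoint_of_forall hsa).star_commutator (hsa t)
  have hp_flow (t : ℝ) : HasDerivAt p (a t * p t - p t * a t) t := by
    rw [IsIdempotentElem.commutator_commutator_eq (hidem t)
      ((hpd t).mul_add_mul_eq_of_forall_isIdempotentElem hidem)]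
    exact hpd t
  have ha : Continuous a :=
    ((hp.continuous_deriv le_rfl).mul hp.continuous).sub
      (hp.continuous.mul (hp.continuous_deriv le_rfl))
  have h_final : v (2 * π) * star (v (2 * π)) = p 0 := by
    have := eq_zero_of_hasDerivAt_commutator (f := fun t => v t * star (v t) - p t)
      ha.continuousOn (fun t => (((hv_flow t).mul_star_of_star_eq_neg (ha_skew t)).sub
        (hp_flow t)).congr_deriv (by noncomm_ring))
      (by simp [hv0, hsa 0, hidem 0]) Real.two_pi_pos.le
    simpa [sub_eq_zero, ← hper 0] using this
  have h_initial : star (v (2 * π)) * v (2 * π) = p 0 := by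
    have hderiv (t : ℝ) := (hv_flow t).star_mul_self_of_star_eq_neg (ha_skew t)
    have hconst := is_const_of_deriv_eq_zero (fun t => (hderiv t).differentiableAt)
      (fun t => (hderiv t).deriv) (2 * π) 0
    simpa [hv0, hsa 0, hidem 0] using hconst
  exact Unitary.mem_iff.mp (IsStarProjection.add_one_sub_mem_unitary ⟨hidem 0, hsa 0⟩
    h_initial h_final)

open scoped Real in
/-- **The monodromy of a periodic path of projections defines a unitary.**
Let `A` be a unital C*-algebra, `p : ℝ → A` a continuously differentiable `2π`-periodic
path of orthogonal projections, and `v : ℝ → A` a continuously differentiable solution of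
the monodromy equation `v'(t) = [p'(t), p(t)]·v(t)` with `v(0) = p(0)`.  Then
`v(2π) + 1 − p(0)` is a unitary element of `A`. -/
theorem monodromy_plus_complement_unitary
    {A : Type*} [CStarAlgebra A]
    (p : ℝ → A) (hp : ContDiff ℝ 1 p)
    (hsa : ∀ t : ℝ, star (p t) = p t) (hidem : ∀ t : ℝ, p t * p t = p t)
    (hper : ∀ t : ℝ, p (t + 2 * π) = p t)
    (v : ℝ → A) (hv' : ContDiff ℝ 1 v)
    (hv : ∀ t : ℝ, HasDerivAt v ((deriv p t * p t - p t * deriv p t) * v t) t)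
    (hv0 : v 0 = p 0) :
    star (v (2 * π) + 1 - p 0) * (v (2 * π) + 1 - p 0) = 1 ∧
      (v (2 * π) + 1 - p 0) * star (v (2 * π) + 1 - p 0) = 1 :=
  monodromy_plus_complement_unitary_general p hp hsa hidem hper v hv hv0
end
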